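/- The slope of the mean-field self-consistency function at the origin: for every even integer N ≥ 2 and real a, the function F(m) = (1/N)·(Σ_{n=0}^{N/2} (4n−N)·C(N/2,n)²·exp(a·m·n)) / (Σ_{n=0}^{N/2} C(N/2,n)²·exp(a·m·n)) satisfies F(0) = 0, is differentiable at 0, and F′(0) = (a/(4N))·(Σ_{n=0}^{N/2} (4n−N)²·C(N/2,n)²) / (Σ_{n=0}^{N/2} C(N/2,n)²); in particular Σ_{n=0}^{N/2} (4n−N)·C(N/2,n)² = 0. -/

import Mathlib

/-!
The weights `C(N/2,n)²` are invariant under `n ↦ N/2 - n`, while `4n - N` changes sign, so the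
numerator of `F` vanishes at `m = 0`. Differentiating the quotient at `0` then leaves only the
derivative of the numerator, `a·Σ (4n-N)·n·C(N/2,n)²`, and writing `(4n-N)·n = ((4n-N)² + N(4n-N))/4`
turns it, again by the vanishing sum, into `(a/4)·Σ (4n-N)²·C(N/2,n)²`.
-/

open Finset Real

theorem sum_range_two_mul_sub_mul_choose_sq {R : Type*} [CommRing R] (M : ℕ) :
    ∑ n ∈ range (M + 1), ((2 * n : R) - M) * (M.choose n : R) ^ 2 = 0 := by
  -- Reflection only gives `S = -S`, which forces `S = 0` in `ℤ` but not in characteristic 2.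
  suffices hZ : ∑ n ∈ range (M + 1), ((2 * n : ℤ) - M) * (M.choose n : ℤ) ^ 2 = 0 by
    exact_mod_cast congrArg (Int.cast : ℤ → R) hZ
  have hreflect := sum_range_reflect (fun n => ((2 * n : ℤ) - M) * (M.choose n : ℤ) ^ 2) (M + 1)
  have hantisymm : ∀ n ∈ range (M + 1),
      ((2 * (M + 1 - 1 - n : ℕ) : ℤ) - M) * (M.choose (M + 1 - 1 - n) : ℤ) ^ 2 =
        -(((2 * n : ℤ) - M) * (M.choose n : ℤ) ^ 2) := by
    intro n hn
    have hnM : n ≤ M := Nat.lt_succ_iff.mp (mem_range.mp hn)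
    rw [Nat.add_sub_cancel, Nat.choose_symm hnM, Nat.cast_sub hnM]
    ring
  rw [sum_congr rfl hantisymm, sum_neg_distrib] at hreflect
  linarith

theorem hasDerivAt_sum_mul_exp {ι : Type*} (s : Finset ι) (c x : ι → ℝ) (a m₀ : ℝ) :
    HasDerivAt (fun m => ∑ i ∈ s, c i * exp (a * m * x i))
      (∑ i ∈ s, c i * (exp (a * m₀ * x i) * (a * x i))) m₀ := by
  refine HasDerivAt.fun_sum fun i _ => HasDerivAt.const_mul _ (HasDerivAt.exp ?_)
  simpa using ((hasDerivAt_id m₀).const_mul a).mul_const (x i)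

theorem hasDerivAt_div_sum_mul_exp_zero {ι : Type*} (s : Finset ι) (f w x : ι → ℝ) (a : ℝ)
    (hZ : ∑ i ∈ s, w i ≠ 0) :
    HasDerivAt
      (fun m => (∑ i ∈ s, f i * w i * exp (a * m * x i)) / ∑ i ∈ s, w i * exp (a * m * x i))
      (a * ((∑ i ∈ s, f i * x i * w i) * ∑ i ∈ s, w i -
          (∑ i ∈ s, f i * w i) * ∑ i ∈ s, x i * w i) / (∑ i ∈ s, w i) ^ 2) 0 := by
  have hnum := hasDerivAt_sum_mul_exp s (fun i => f i * w i) x a 0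
  have hden := hasDerivAt_sum_mul_exp s w x a 0
  refine (hnum.div hden (by simpa using hZ)).congr_deriv ?_
  have hnum' : ∑ i ∈ s, f i * w i * (1 * (a * x i)) = a * ∑ i ∈ s, f i * x i * w i := by
    rw [mul_sum]; exact sum_congr rfl fun i _ => by ring
  have hden' : ∑ i ∈ s, w i * (1 * (a * x i)) = a * ∑ i ∈ s, x i * w i := by
    rw [mul_sum]; exact sum_congr rfl fun i _ => by ring
  simp only [mul_zero, zero_mul, exp_zero, mul_one, hnum', hden']
  ring

theorem mean_field_F_deriv_at_zero_general (N : ℕ) (hNe : Even N) (a : ℝ)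
    (F : ℝ → ℝ)
    (hF : F = fun m =>
      (1 / (N : ℝ)) *
        ((∑ n ∈ Finset.range (N / 2 + 1),
            ((4 * n : ℝ) - N) * ((N / 2).choose n : ℝ) ^ 2 * Real.exp (a * m * n))
          / (∑ n ∈ Finset.range (N / 2 + 1),
              ((N / 2).choose n : ℝ) ^ 2 * Real.exp (a * m * n)))) :
    F 0 = 0 ∧
    HasDerivAt F
      ((a / (4 * N : ℝ)) *
        ((∑ n ∈ Finset.range (N / 2 + 1),
            ((4 * n : ℝ) - N) ^ 2 * ((N / 2).choose n : ℝ) ^ 2)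
          / (∑ n ∈ Finset.range (N / 2 + 1), ((N / 2).choose n : ℝ) ^ 2))) 0 ∧
    (∑ n ∈ Finset.range (N / 2 + 1),
        ((4 * n : ℤ) - N) * ((N / 2).choose n : ℤ) ^ 2) = 0 := by
  obtain ⟨M, rfl⟩ := hNe
  have hhalf : (M + M) / 2 = M := by omega
  simp only [hhalf] at hF ⊢
  generalize hN : M + M = N at hF ⊢
  have hbalanced (R : Type) [CommRing R] :
      ∑ n ∈ range (M + 1), ((4 * n : R) - N) * (M.choose n : R) ^ 2 = 0 := by
    have h := congrArg (2 * ·) (sum_range_two_mul_sub_mul_choose_sq (R := R) M)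
    simp only [mul_sum, mul_zero] at h
    rw [← h]
    exact sum_congr rfl fun n _ => by subst hN; push_cast; ring
  have hZ : ∑ n ∈ range (M + 1), (M.choose n : ℝ) ^ 2 ≠ 0 :=
    (sum_pos (fun n hn => pow_pos (Nat.cast_pos.mpr (Nat.choose_pos
      (Nat.lt_succ_iff.mp (mem_range.mp hn)))) 2) nonempty_range_add_one).ne'
  have hslope : ∑ n ∈ range (M + 1), ((4 * n : ℝ) - N) * n * (M.choose n : ℝ) ^ 2 =
      (1 / 4) * ∑ n ∈ range (M + 1), ((4 * n : ℝ) - N) ^ 2 * (M.choose n : ℝ) ^ 2 := by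
    rw [← add_zero (_ * _), ← mul_zero ((N : ℝ) / 4), ← hbalanced ℝ, mul_sum, mul_sum,
      ← sum_add_distrib]
    exact sum_congr rfl fun n _ => by ring
  subst hF
  refine ⟨by simp [hbalanced ℝ], ?_, hbalanced ℤ⟩
  refine ((hasDerivAt_div_sum_mul_exp_zero (range (M + 1)) (fun n => (4 * n : ℝ) - N)
    (fun n => (M.choose n : ℝ) ^ 2) (fun n => (n : ℝ)) a hZ).const_mul (1 / (N : ℝ))).congr_deriv ?_
  rw [hslope, hbalanced ℝ]
  field_simp
  ring

/-- The slope of the mean-field self-consistency function at the origin: for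
`F(m) = (1/N)·(Σₙ (4n−N)·C(N/2,n)²·e^{amn}) / (Σₙ C(N/2,n)²·e^{amn})`
(sums over `0 ≤ n ≤ N/2`), one has `F(0) = 0`, `F` is differentiable at `0` with
`F′(0) = (a/(4N))·(Σₙ (4n−N)²·C(N/2,n)²)/(Σₙ C(N/2,n)²)`; in particular
`Σₙ (4n−N)·C(N/2,n)² = 0`. -/
theorem mean_field_F_deriv_at_zero (N : ℕ) (hN : 2 ≤ N) (hNe : Even N) (a : ℝ)
    (F : ℝ → ℝ)
    (hF : F = fun m =>
      (1 / (N : ℝ)) *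
        ((∑ n ∈ Finset.range (N / 2 + 1),
            ((4 * n : ℝ) - N) * ((N / 2).choose n : ℝ) ^ 2 * Real.exp (a * m * n))
          / (∑ n ∈ Finset.range (N / 2 + 1),
              ((N / 2).choose n : ℝ) ^ 2 * Real.exp (a * m * n)))) :
    F 0 = 0 ∧
    HasDerivAt F
      ((a / (4 * N : ℝ)) *
        ((∑ n ∈ Finset.range (N / 2 + 1),
            ((4 * n : ℝ) - N) ^ 2 * ((N / 2).choose n : ℝ) ^ 2)
          / (∑ n ∈ Finset.range (N / 2 + 1), ((N / 2).choose n : ℝ) ^ 2))) 0 ∧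
    (∑ n ∈ Finset.range (N / 2 + 1),
        ((4 * n : ℤ) - N) * ((N / 2).choose n : ℤ) ^ 2) = 0 :=
  mean_field_F_deriv_at_zero_general N hNe a F hF
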